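/- arXiv:2212.04301 — 2 statements merged into one kernel-verified Lean document; each statement's English description precedes it below -/
import Mathlib

section
/- Let d, r₃, r₁, a, k, b, ε > 0 with a > 1, k > 1, λ_u = √(r₃(a-1)/d), s = 2dλ_u, B₀ = λ_u·e, and suppose r₁(ε/e + k + b(2a-1) - 1) ≤ r₃(a-1). Let α satisfy α(z) ≥ -ε·e^{λ_u z} for z < 0. Define ψ(z) = 1 + B₀·z·e^{λ_u z}. Then for all z < -1/λ_u: d·ψ''(z) - s·ψ'(z) + r₁·ψ(z)·[1 + α(z) - ψ(z) - k·(-B₀ z e^{λ_u z}) - b(2a-1)(-B₀ z e^{λ_u z})] ≥ 0. -/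
lemma hasDerivAt_psi (B l z : ℝ) :
    HasDerivAt (fun z => 1 + B * z * Real.exp (l * z))
      (B * Real.exp (l * z) + B * z * (l * Real.exp (l * z))) z := by
  have h1 : HasDerivAt (fun z : ℝ => l * z) l z := by
    simpa using (hasDerivAt_id z).const_mul l
  have h2 : HasDerivAt (fun z : ℝ => Real.exp (l * z)) (Real.exp (l * z) * l) z := h1.exp
  have h3 : HasDerivAt (fun z : ℝ => B * z) B z := by
    simpa using (hasDerivAt_id z).const_mul B
  have h4 := (h3.mul h2).const_add 1
  exact h4.congr_deriv (by ring)

lemma deriv_psi (B l : ℝ) :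
    deriv (fun z => 1 + B * z * Real.exp (l * z))
      = fun z => B * Real.exp (l * z) + B * z * (l * Real.exp (l * z)) := by
  funext z; exact (hasDerivAt_psi B l z).deriv

lemma hasDerivAt_psi' (B l z : ℝ) :
    HasDerivAt (fun z => B * Real.exp (l * z) + B * z * (l * Real.exp (l * z)))
      (B * (Real.exp (l * z) * l)
        + (B * (l * Real.exp (l * z)) + B * z * (l * (Real.exp (l * z) * l)))) z := by
  have h1 : HasDerivAt (fun z : ℝ => l * z) l z := by
    simpa using (hasDerivAt_id z).const_mul l
  have h2 : HasDerivAt (fun z : ℝ => Real.exp (l * z)) (Real.exp (l * z) * l) z := h1.exp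
  have h3 : HasDerivAt (fun z : ℝ => B * z) B z := by
    simpa using (hasDerivAt_id z).const_mul B
  have h5 : HasDerivAt (fun z : ℝ => l * Real.exp (l * z)) (l * (Real.exp (l * z) * l)) z :=
    h2.const_mul l
  exact (h2.const_mul B).add (h3.mul h5)

set_option maxHeartbeats 1000000 in
theorem lower_solution_L1_critical (d r₃ r₁ a k b ε : ℝ)
    (hd : 0 < d) (hr₃ : 0 < r₃) (hr₁ : 0 < r₁) (ha : 1 < a) (hk : 1 < k)
    (hb : 0 < b) (hε : 0 < ε)
    (hcond : r₁ * (ε / Real.exp 1 + k + b * (2 * a - 1) - 1) ≤ r₃ * (a - 1))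
    (α : ℝ → ℝ)
    (hα : ∀ z < 0, α z ≥ -ε * Real.exp (Real.sqrt (r₃ * (a - 1) / d) * z)) :
    let ldu := Real.sqrt (r₃ * (a - 1) / d)
    let s := 2 * d * ldu
    let B₀ := ldu * Real.exp 1
    ∀ z < -1 / ldu,
      d * deriv (deriv (fun z => 1 + B₀ * z * Real.exp (ldu * z))) z
        - s * deriv (fun z => 1 + B₀ * z * Real.exp (ldu * z)) z
        + r₁ * (1 + B₀ * z * Real.exp (ldu * z)) *
          (1 + α z - (1 + B₀ * z * Real.exp (ldu * z))
            - k * (-B₀ * z * Real.exp (ldu * z))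
            - b * (2 * a - 1) * (-B₀ * z * Real.exp (ldu * z))) ≥ 0 := by
  intro ldu s B₀ z hz
  have hBdef : B₀ = ldu * Real.exp 1 := rfl
  have hsdef : s = 2 * d * ldu := rfl
  have hldef : ldu = Real.sqrt (r₃ * (a - 1) / d) := rfl
  clear_value B₀ s ldu
  have ha1 : 0 < a - 1 := by linarith
  have hl0 : 0 < ldu := by
    rw [hldef]
    apply Real.sqrt_pos.mpr
    positivity
  have hdl : d * ldu ^ 2 = r₃ * (a - 1) := by
    rw [hldef, Real.sq_sqrt (by positivity : (0:ℝ) ≤ r₃ * (a - 1) / d)]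
    field_simp
  have hz0 : z < 0 := lt_trans hz (by
    simpa using div_neg_of_neg_of_pos (by norm_num : (-1:ℝ) < 0) hl0)
  have ht : ldu * z < -1 := by
    have := (lt_div_iff₀ hl0).mp hz
    linarith [this]
  set E := Real.exp (ldu * z) with hE
  clear_value E
  have hE0 : 0 < E := by rw [hE]; exact Real.exp_pos _
  have he0 : 0 < Real.exp 1 := Real.exp_pos 1
  set u := B₀ * z * E with hu
  clear_value u
  have hu_neg : u < 0 := by
    rw [hu, hBdef]
    have : ldu * Real.exp 1 * z < 0 := by nlinarith
    exact mul_neg_of_neg_of_pos this hE0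
  -- u ≥ -1 : (ldu*z) * exp(ldu*z + 1) ≥ -1
  have hum : -1 ≤ u := by
    have hexp : -(ldu * z) ≤ Real.exp (-(ldu * z + 1)) := by
      have := Real.add_one_le_exp (-(ldu * z + 1))
      linarith
    have hzero : (ldu * z + 1) + (-(ldu * z + 1)) = 0 := by ring
    have hprod : Real.exp (ldu * z + 1) * Real.exp (-(ldu * z + 1)) = 1 := by
      rw [← Real.exp_add, hzero, Real.exp_zero]
    have hE1 : E * Real.exp 1 = Real.exp (ldu * z + 1) := by
      rw [hE, ← Real.exp_add]
    have hu_eq : u = (ldu * z) * Real.exp (ldu * z + 1) := by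
      rw [hu, hBdef, ← hE1]; ring
    rw [hu_eq]
    nlinarith [Real.exp_pos (ldu * z + 1), Real.exp_pos (-(ldu * z + 1)),
      mul_le_mul_of_nonneg_right hexp (Real.exp_pos (ldu * z + 1)).le]
  -- exp 1 * E ≤ -u
  have hEu : Real.exp 1 * E ≤ -u := by
    have h1 : 1 < -(ldu * z) := by linarith
    have h2 : Real.exp 1 * E ≤ (-(ldu * z)) * (Real.exp 1 * E) := by
      nlinarith [mul_lt_mul_of_pos_right h1 (mul_pos he0 hE0)]
    have heq : (-(ldu * z)) * (Real.exp 1 * E) = -(ldu * Real.exp 1 * z * E) := by ring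
    rw [hu, hBdef]
    linarith [h2, heq.le]
  have hαz : α z ≥ -ε * E := by
    have h := hα z hz0
    rw [← hldef] at h
    rw [hE]
    exact h
  -- rewrite the derivatives
  rw [deriv_psi B₀ ldu, (hasDerivAt_psi' B₀ ldu z).deriv]
  beta_reduce
  have hmain : d * (B₀ * (Real.exp (ldu * z) * ldu) + (B₀ * (ldu * Real.exp (ldu * z))
        + B₀ * z * (ldu * (Real.exp (ldu * z) * ldu))))
      - s * (B₀ * Real.exp (ldu * z) + B₀ * z * (ldu * Real.exp (ldu * z)))
      + r₁ * (1 + u) * (1 + α z - (1 + u) - k * (-B₀ * z * E) - b * (2 * a - 1) * (-B₀ * z * E))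
      = -(r₃ * (a - 1)) * u + r₁ * (1 + u) * (α z + (k + b * (2 * a - 1) - 1) * u) := by
    simp only [hsdef, hu, hE]
    rw [← hdl]; ring
  rw [hmain]
  clear hmain hα hz hldef hBdef hsdef hE hu hz0 ht hdl
  set c := k + b * (2 * a - 1) - 1 with hc
  clear_value c
  have hc0 : 0 < c := by rw [hc]; nlinarith
  have hεe : r₁ * ε + r₁ * c * Real.exp 1 ≤ r₃ * (a - 1) * Real.exp 1 := by
    have h := mul_le_mul_of_nonneg_right hcond he0.le
    have heq : r₁ * (ε / Real.exp 1 + k + b * (2 * a - 1) - 1) * Real.exp 1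
        = r₁ * ε + r₁ * c * Real.exp 1 := by
      rw [hc]; field_simp; ring
    linarith [heq.le, heq.ge]
  clear hcond
  have hfac : 0 ≤ r₃ * (a - 1) - r₁ * c := by
    nlinarith [mul_pos hr₁ hε]
  rcases le_or_gt 0 (α z + c * u) with hpos | hneg
  · have h1 : 0 ≤ r₁ * (1 + u) * (α z + c * u) :=
      mul_nonneg (mul_nonneg hr₁.le (by linarith)) hpos
    nlinarith [mul_nonneg (mul_pos hr₃ ha1).le (neg_nonneg.2 hu_neg.le)]
  · have h1 : r₁ * (1 + u) * (α z + c * u) ≥ r₁ * (α z + c * u) := by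
      nlinarith [mul_nonneg hr₁.le
        (mul_nonneg (neg_nonneg.2 hu_neg.le) (neg_nonneg.2 hneg.le))]
    have h2 : r₁ * (α z + c * u) ≥ r₁ * (-ε * E + c * u) := by
      nlinarith [mul_le_mul_of_nonneg_left (show -ε * E ≤ α z by linarith) hr₁.le]
    have h3 : (-u) * (r₃ * (a - 1) - r₁ * c) ≥ r₁ * ε * E := by
      nlinarith [mul_le_mul_of_nonneg_right hEu hfac,
        mul_le_mul_of_nonneg_right
          (show r₁ * ε ≤ (r₃ * (a - 1) - r₁ * c) * Real.exp 1 by linarith) hE0.le]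
    nlinarith
end

section
/- Let d, s, r, γ > 0 and let α̂ : ℝ → ℝ be continuous, nonpositive, with α̂(z) ≥ -ε·e^{ρz} for all z < 0, for some ε, ρ > 0. Choose λ₀ ∈ (0, ρ) with d·λ₀² - s·λ₀ + r·ε < 0. Then the function φ̲(z) = γ·max{1 - e^{λ₀ z}, 0} satisfies, for all z < 0: d·φ̲''(z) - s·φ̲'(z) + r·φ̲(z)·[γ + α̂(z) - φ̲(z)] ≥ 0. -/
/-!
Near any `z < 0` the profile `γ * max (1 - exp (λ₀ y)) 0` coincides with the smooth function
`γ (1 - exp (λ₀ y))`, so with `E = exp (λ₀ z) ∈ (0, 1)` its derivatives are `-γλ₀E` and `-γλ₀²E`.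
The decay hypothesis and `ρ > λ₀` give `α̂(z) ≥ -ε e^{ρz} ≥ -εE`, and then the left-hand side is
at least `-γE (dλ₀² - sλ₀ + rε) > 0`.
-/

open Filter Topology Real

section ExpProfile

variable (γ l : ℝ)

theorem deriv_const_mul_one_sub_exp :
    deriv (fun y => γ * (1 - exp (l * y))) = fun y => -(γ * l * exp (l * y)) := by
  funext y
  have h := ((((hasDerivAt_id y).const_mul l).exp).const_sub 1).const_mul γ
  simp only [id_eq, mul_one] at h
  rw [h.deriv]
  ring

theorem deriv_deriv_const_mul_one_sub_exp :
    deriv (deriv fun y => γ * (1 - exp (l * y))) = fun y => -(γ * l ^ 2 * exp (l * y)) := by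
  rw [deriv_const_mul_one_sub_exp]
  funext y
  have h := (((hasDerivAt_id y).const_mul l).exp).const_mul (-(γ * l))
  simp only [id_eq, mul_one] at h
  rw [show (fun y => -(γ * l * exp (l * y))) = fun y => -(γ * l) * exp (l * y) by
    funext; ring, h.deriv]
  ring

theorem max_one_sub_exp_eventuallyEq {l z : ℝ} (hl : 0 < l) (hz : z < 0) :
    (fun y => γ * max (1 - exp (l * y)) 0) =ᶠ[𝓝 z] fun y => γ * (1 - exp (l * y)) := by
  filter_upwards [Iio_mem_nhds hz] with y hy
  have : exp (l * y) < 1 := exp_lt_one_iff.mpr (mul_neg_of_pos_of_neg hl hy)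
  rw [max_eq_left (by linarith)]

end ExpProfile

theorem subsolution_ineq_of_exp_bounds {d s r γ ε l E a : ℝ} (hr : 0 ≤ r) (hγ : 0 ≤ γ)
    (hε : 0 ≤ ε) (hE₀ : 0 ≤ E) (hE₁ : E ≤ 1) (ha : -ε * E ≤ a)
    (hneg : d * l ^ 2 - s * l + r * ε < 0) :
    0 ≤ d * -(γ * l ^ 2 * E) - s * -(γ * l * E)
      + r * (γ * (1 - E)) * (γ + a - γ * (1 - E)) := by
  have hdecay : -(ε * E) ≤ (1 - E) * a := by
    nlinarith [mul_le_mul_of_nonneg_left ha (sub_nonneg.mpr hE₁), mul_nonneg hε (sq_nonneg E)]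
  have hlogistic : 0 ≤ γ * (1 - E) * (γ * E) :=
    mul_nonneg (mul_nonneg hγ (sub_nonneg.mpr hE₁)) (mul_nonneg hγ hE₀)
  calc (0 : ℝ) ≤ γ * E * -(d * l ^ 2 - s * l + r * ε) :=
        mul_nonneg (mul_nonneg hγ hE₀) (neg_nonneg.mpr hneg.le)
    _ ≤ _ := by nlinarith [mul_le_mul_of_nonneg_left hdecay (mul_nonneg hr hγ),
        mul_nonneg hr hlogistic]

theorem scalar_subsolution_general (d s r γ ε ρ ld₀ : ℝ)
    (hr : 0 < r) (hγ : 0 < γ) (hε : 0 < ε)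
    (hld₀ : 0 < ld₀) (hldρ : ld₀ < ρ)
    (hneg : d * ld₀ ^ 2 - s * ld₀ + r * ε < 0)
    (αhat : ℝ → ℝ)
    (hdecay : ∀ z < 0, αhat z ≥ -ε * Real.exp (ρ * z)) :
    ∀ z < 0,
      d * deriv (deriv (fun z => γ * max (1 - Real.exp (ld₀ * z)) 0)) z
        - s * deriv (fun z => γ * max (1 - Real.exp (ld₀ * z)) 0) z
        + r * (γ * max (1 - Real.exp (ld₀ * z)) 0) *
          (γ + αhat z - γ * max (1 - Real.exp (ld₀ * z)) 0) ≥ 0 := by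
  intro z hz
  have hsmooth := max_one_sub_exp_eventuallyEq γ hld₀ hz
  have hE₁ : exp (ld₀ * z) < 1 := exp_lt_one_iff.mpr (mul_neg_of_pos_of_neg hld₀ hz)
  have hα : -ε * exp (ld₀ * z) ≤ αhat z := by
    have : exp (ρ * z) ≤ exp (ld₀ * z) := exp_le_exp.mpr (by nlinarith)
    nlinarith [hdecay z hz]
  rw [hsmooth.deriv.deriv_eq, hsmooth.deriv_eq, hsmooth.eq_of_nhds,
    deriv_deriv_const_mul_one_sub_exp, deriv_const_mul_one_sub_exp]
  exact subsolution_ineq_of_exp_bounds hr.le hγ.le hε.le (exp_nonneg _) hE₁.le hα hneg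

theorem scalar_subsolution (d s r γ ε ρ ld₀ : ℝ)
    (hd : 0 < d) (hs : 0 < s) (hr : 0 < r) (hγ : 0 < γ) (hε : 0 < ε) (hρ : 0 < ρ)
    (hld₀ : 0 < ld₀) (hldρ : ld₀ < ρ)
    (hneg : d * ld₀ ^ 2 - s * ld₀ + r * ε < 0)
    (αhat : ℝ → ℝ) (hcont : Continuous αhat) (hnonpos : ∀ z, αhat z ≤ 0)
    (hdecay : ∀ z < 0, αhat z ≥ -ε * Real.exp (ρ * z)) :
    ∀ z < 0,
      d * deriv (deriv (fun z => γ * max (1 - Real.exp (ld₀ * z)) 0)) z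
        - s * deriv (fun z => γ * max (1 - Real.exp (ld₀ * z)) 0) z
        + r * (γ * max (1 - Real.exp (ld₀ * z)) 0) *
          (γ + αhat z - γ * max (1 - Real.exp (ld₀ * z)) 0) ≥ 0 :=
  scalar_subsolution_general d s r γ ε ρ ld₀ hr hγ hε hld₀ hldρ hneg αhat hdecay
end
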